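/- For every positive equivalence relation η, the ascending family 𝒜_η is weakly confidently learnable but not confidently learnable. -/

import Mathlib

/-!
On a finite sequence σ the learner looks for the least `y ≤ |σ|` that is not yet confirmed, i.e.
not seen (running the r.e. index of η for `|σ|` steps) to be equivalent to a datum of σ, and
conjectures the η-closure of `[0, y)`. On a text whose content lies in some `A_k`, this least
unconfirmed `y` converges to the least number equivalent to no datum; for a text of `A_n` that
number is `a_n`, and the η-closure of `[0, a_n)` is `A_n`. So the learner converges on every
text consistent with `𝒜_η` and identifies each `A_n`.

Any Ex-learner of `𝒜_η` must change its mind along the strictly ascending chain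
`A_0 ⊂ A_1 ⊂ ⋯`: extend a sequence with content in `A_n` along a text for `A_n` until the learner
conjectures `A_n`, then along a text for `A_{n+1}` until it conjectures `A_{n+1}`. The union of
these sequences is a text on which the learner never converges.
-/

namespace PEL

/-- Evaluation of the `e`-th partial recursive function (via the standard
numbering of `Nat.Partrec.Code`). -/
def evalCode (e : ℕ) (x : ℕ) : Part ℕ :=
  (Denumerable.ofNat Nat.Partrec.Code e).eval x

/-- The `e`-th recursively enumerable set `W_e = dom φ_e`. -/
def W (e : ℕ) : Set ℕ := {x | (evalCode e x).Dom}

/-- A set is r.e. iff it equals some `W_e`. -/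
def RESet (S : Set ℕ) : Prop := ∃ e, W e = S

/-- A positive equivalence relation: an r.e. equivalence relation on ℕ
with infinitely many equivalence classes. -/
structure PosEq where
  rel : ℕ → ℕ → Prop
  equiv : Equivalence rel
  re : ∃ e, ∀ x y, rel x y ↔ Nat.pair x y ∈ W e
  classes_infinite : (Set.range fun x => {y | rel x y}).Infinite

/-- The η-equivalence class of `x`. -/
def classOf (η : PosEq) (x : ℕ) : Set ℕ := {y | η.rel x y}

/-- A set is η-closed iff it is a union of η-equivalence classes. -/
def EtaClosed (η : PosEq) (S : Set ℕ) : Prop := ∀ x ∈ S, classOf η x ⊆ S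

/-- A set is η-finite iff it is a union of finitely many η-equivalence classes. -/
def EtaFinite (η : PosEq) (S : Set ℕ) : Prop :=
  EtaClosed η S ∧ (classOf η '' S).Finite

/-- A set is η-infinite iff it is a union of infinitely many η-equivalence classes. -/
def EtaInfinite (η : PosEq) (S : Set ℕ) : Prop :=
  EtaClosed η S ∧ (classOf η '' S).Infinite

/-- `f` is a one-one uniformly r.e. numbering of the class `C`:
`f` is computable, `i ↦ W_{f i}` is injective, and `C = {W_{f i} : i ∈ ℕ}`. -/
def OneOneNumbering (f : ℕ → ℕ) (C : Set (Set ℕ)) : Prop :=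
  Computable f ∧ (∀ i j, W (f i) = W (f j) → i = j) ∧ C = Set.range fun i => W (f i)

/-- An η-family: an (automatically infinite) class of η-closed r.e. sets
admitting a one-one uniformly r.e. numbering. -/
def EtaFamily (η : PosEq) (C : Set (Set ℕ)) : Prop :=
  (∀ L ∈ C, EtaClosed η L) ∧ ∃ f, OneOneNumbering f C

/-- `a η n` is the `n`-th (in ascending order) least representative of an
η-equivalence class. -/
noncomputable def a (η : PosEq) (n : ℕ) : ℕ := Nat.nth (fun x => ∀ y, η.rel x y → x ≤ y) n

/-- `A η n = [a_0] ∪ … ∪ [a_{n-1}]`. -/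
def A (η : PosEq) (n : ℕ) : Set ℕ := {x | ∃ m < n, η.rel (a η m) x}

/-- The ascending family `𝒜_η = {A_n : n ∈ ℕ}`. -/
def ascendingFamily (η : PosEq) : Set (Set ℕ) := Set.range (A η)

/-- A learner: a map from finite sequences over ℕ ∪ {#} (with `none` as the
pause symbol `#`) to hypotheses in ℕ ∪ {?} (with `none` as `?`). -/
abbrev Learner := List (Option ℕ) → Option ℕ

/-- The content of a text. -/
def cntT (T : ℕ → Option ℕ) : Set ℕ := {x | ∃ n, T n = some x}

/-- `T` is a text for `L`. -/
def IsText (T : ℕ → Option ℕ) (L : Set ℕ) : Prop := cntT T = L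

/-- The initial segment `T[n] = T(0), …, T(n-1)`. -/
def seg (T : ℕ → Option ℕ) (n : ℕ) : List (Option ℕ) := (List.range n).map T

/-- The content of a finite sequence. -/
def cntL (σ : List (Option ℕ)) : Set ℕ := {x | some x ∈ σ}

/-- Explanatory learning with hypotheses interpreted in hypothesis space `H`. -/
def ExLearnsIn (H : ℕ → Set ℕ) (M : Learner) (C : Set (Set ℕ)) : Prop :=
  ∀ L ∈ C, ∀ T, IsText T L →
    ∃ n e, M (seg T n) = some e ∧ H e = L ∧ ∀ j, n ≤ j → M (seg T j) = M (seg T n)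

/-- Behaviourally correct learning with hypothesis space `H`. -/
def BCLearnsIn (H : ℕ → Set ℕ) (M : Learner) (C : Set (Set ℕ)) : Prop :=
  ∀ L ∈ C, ∀ T, IsText T L →
    ∃ n, ∀ j, n ≤ j → ∃ e, M (seg T j) = some e ∧ H e = L

/-- Finite (one-shot) learning with hypothesis space `H`. -/
def FinLearnsIn (H : ℕ → Set ℕ) (M : Learner) (C : Set (Set ℕ)) : Prop :=
  ∀ L ∈ C, ∀ T, IsText T L →
    ∃ n e, M (seg T n) = some e ∧ H e = L ∧ (∀ m, m < n → M (seg T m) = none) ∧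
      ∀ j, n ≤ j → M (seg T j) = M (seg T n)

/-- The sequence of hypotheses of `M` on text `T` converges. -/
def ConvergesOn (M : Learner) (T : ℕ → Option ℕ) : Prop :=
  ∃ n, ∀ j, n ≤ j → M (seg T j) = M (seg T n)

/-- Confident learning with hypothesis space `H`: explanatory learning with
convergence on every text for every subset of ℕ. -/
def ConfLearnsIn (H : ℕ → Set ℕ) (M : Learner) (C : Set (Set ℕ)) : Prop :=
  ExLearnsIn H M C ∧ ∀ T, ConvergesOn M T

/-- Vacillatory learning with hypothesis space `H`. -/
def VacLearnsIn (H : ℕ → Set ℕ) (M : Learner) (C : Set (Set ℕ)) : Prop :=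
  BCLearnsIn H M C ∧
    ∀ L ∈ C, ∀ T, IsText T L → {h : Option ℕ | ∃ n, 1 ≤ n ∧ M (seg T n) = h}.Finite

/-- Weakly confident learning with hypothesis space `H`: explanatory learning
with convergence on every text consistent with the class. -/
def WConfLearnsIn (H : ℕ → Set ℕ) (M : Learner) (C : Set (Set ℕ)) : Prop :=
  ExLearnsIn H M C ∧ ∀ T, (∃ L ∈ C, cntT T ⊆ L) → ConvergesOn M T

def ExLearnable (C : Set (Set ℕ)) : Prop :=
  ∃ M : Learner, Computable M ∧ ExLearnsIn W M C

def BCLearnable (C : Set (Set ℕ)) : Prop :=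
  ∃ M : Learner, Computable M ∧ BCLearnsIn W M C

def FinLearnable (C : Set (Set ℕ)) : Prop :=
  ∃ M : Learner, Computable M ∧ FinLearnsIn W M C

def ConfLearnable (C : Set (Set ℕ)) : Prop :=
  ∃ M : Learner, Computable M ∧ ConfLearnsIn W M C

def VacLearnable (C : Set (Set ℕ)) : Prop :=
  ∃ M : Learner, Computable M ∧ VacLearnsIn W M C

def WConfLearnable (C : Set (Set ℕ)) : Prop :=
  ∃ M : Learner, Computable M ∧ WConfLearnsIn W M C

end PEL

theorem exists_seq_of_forall_exists {α : Type*} {P : α → Prop} {r : α → α → Prop} {x₀ : α}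
    (h₀ : P x₀) (h : ∀ x, P x → ∃ y, P y ∧ r x y) : ∃ f : ℕ → α, ∀ n, r (f n) (f (n + 1)) := by
  choose g hgP hgr using h
  let step : Subtype P → Subtype P := fun x => ⟨g x x.2, hgP x x.2⟩
  refine ⟨fun n => (step^[n] ⟨x₀, h₀⟩).1, fun n => ?_⟩
  simp only [Function.iterate_succ_apply']
  exact hgr _ _

theorem Primrec.list_any {α β : Type*} [Primcodable α] [Primcodable β] {f : α → List β}
    {p : α → β → Bool} (hf : Primrec f) (hp : Primrec₂ p) : Primrec fun a => (f a).any (p a) :=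
  (Primrec.nat_lt.decide.comp (Primrec.list_findIdx hf hp) (Primrec.list_length.comp hf)).of_eq
    fun a => by simp [List.findIdx_lt_length, List.any_eq]

namespace PEL

open Filter
open Nat.Partrec (Code)
open Nat.Partrec.Code

section LeastRepresentatives

variable {η : PosEq}

def IsLeastRep (η : PosEq) (x : ℕ) : Prop := ∀ y, η.rel x y → x ≤ y

noncomputable def minRep (η : PosEq) (x : ℕ) : ℕ := sInf (classOf η x)

theorem rel_minRep (x : ℕ) : η.rel x (minRep η x) := Nat.sInf_mem ⟨x, η.equiv.refl x⟩

theorem minRep_le {x y : ℕ} (h : η.rel x y) : minRep η x ≤ y := Nat.sInf_le h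

theorem isLeastRep_minRep (x : ℕ) : IsLeastRep η (minRep η x) :=
  fun _ hy => minRep_le (η.equiv.trans (rel_minRep x) hy)

theorem classOf_minRep (x : ℕ) : classOf η (minRep η x) = classOf η x := by
  ext y
  exact ⟨η.equiv.trans (rel_minRep x), η.equiv.trans (η.equiv.symm (rel_minRep x))⟩

theorem infinite_setOf_isLeastRep : {x | IsLeastRep η x}.Infinite := by
  refine fun hfin => η.classes_infinite ((hfin.image (classOf η)).subset ?_)
  rintro _ ⟨x, rfl⟩
  exact ⟨minRep η x, isLeastRep_minRep x, classOf_minRep x⟩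

theorem isLeastRep_a (n : ℕ) : IsLeastRep η (a η n) :=
  Nat.nth_mem_of_infinite infinite_setOf_isLeastRep n

theorem strictMono_a : StrictMono (a η) := Nat.nth_strictMono infinite_setOf_isLeastRep

theorem exists_a_eq_minRep (x : ℕ) : ∃ n, a η n = minRep η x :=
  (Set.ext_iff.mp (Nat.range_nth_of_infinite infinite_setOf_isLeastRep) _).mpr
    (isLeastRep_minRep x)

theorem a_notMem_A (n : ℕ) : a η n ∉ A η n := by
  rintro ⟨m, hm, hrel⟩
  exact (strictMono_a hm).not_ge (isLeastRep_a n _ (η.equiv.symm hrel))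

theorem mem_A_of_rel {n x y : ℕ} (hx : x ∈ A η n) (h : η.rel x y) : y ∈ A η n :=
  let ⟨m, hm, hrel⟩ := hx
  ⟨m, hm, η.equiv.trans hrel h⟩

theorem not_rel_a_of_mem_A {n x : ℕ} (hx : x ∈ A η n) : ¬ η.rel x (a η n) :=
  fun h => a_notMem_A n (mem_A_of_rel hx h)

theorem mem_A_of_lt_a {n y : ℕ} (h : y < a η n) : y ∈ A η n := by
  obtain ⟨m, hm⟩ := exists_a_eq_minRep (η := η) y
  refine ⟨m, (strictMono_a (η := η)).lt_iff_lt.mp ?_, hm ▸ η.equiv.symm (rel_minRep y)⟩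
  rw [hm]
  exact (minRep_le (η.equiv.refl y)).trans_lt h

theorem A_eq_setOf_exists_lt_a (n : ℕ) : A η n = {z | ∃ y < a η n, η.rel y z} := by
  ext z
  constructor
  · rintro ⟨m, hm, h⟩
    exact ⟨a η m, strictMono_a hm, h⟩
  · rintro ⟨y, hy, h⟩
    exact mem_A_of_rel (mem_A_of_lt_a hy) h

theorem isLeast_a (n : ℕ) : IsLeast {y | ∀ x ∈ A η n, ¬ η.rel x y} (a η n) :=
  ⟨fun _ => not_rel_a_of_mem_A,
    fun y hy => not_lt.mp fun hlt => hy y (mem_A_of_lt_a hlt) (η.equiv.refl y)⟩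

theorem strictMono_A : StrictMono (A η) :=
  strictMono_nat_of_lt_succ fun n => ⟨fun _ ⟨m, hm, h⟩ => ⟨m, hm.trans n.lt_succ_self, h⟩,
    fun hsub => a_notMem_A n (hsub ⟨n, n.lt_succ_self, η.equiv.refl _⟩)⟩

end LeastRepresentatives

section Texts

theorem length_seg (T : ℕ → Option ℕ) (n : ℕ) : (seg T n).length = n := by
  simp [seg]

theorem getElem_seg (T : ℕ → Option ℕ) {n i : ℕ} (hi : i < (seg T n).length) :
    (seg T n)[i] = T i := by
  simp [seg]

theorem take_seg (T : ℕ → Option ℕ) (m n : ℕ) : (seg T n).take m = seg T (min m n) := by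
  simp [seg, ← List.map_take, List.take_range]

theorem seg_prefix_seg (T : ℕ → Option ℕ) {m n : ℕ} (h : m ≤ n) : seg T m <+: seg T n := by
  rw [List.prefix_iff_eq_take, length_seg, take_seg, min_eq_left h]

theorem eq_seg_of_prefix_seg {T : ℕ → Option ℕ} {ρ : List (Option ℕ)} {n : ℕ}
    (h : ρ <+: seg T n) : ρ = seg T ρ.length := by
  have hlen : ρ.length ≤ n := length_seg T n ▸ h.length_le
  exact (List.prefix_iff_eq_take.mp h).trans (by rw [take_seg, min_eq_left hlen])

theorem cntL_seg_subset (T : ℕ → Option ℕ) (n : ℕ) : cntL (seg T n) ⊆ cntT T := by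
  intro x hx
  obtain ⟨i, -, hi⟩ := List.mem_map.mp hx
  exact ⟨i, hi⟩

theorem exists_isText_seg_eq {L : Set ℕ} {σ : List (Option ℕ)} (hσ : cntL σ ⊆ L) :
    ∃ T, IsText T L ∧ seg T σ.length = σ := by
  classical
  refine ⟨fun i => σ.getD i (if i - σ.length ∈ L then some (i - σ.length) else none), ?_, ?_⟩
  · ext x
    constructor
    · rintro ⟨i, hi⟩
      dsimp only at hi
      by_cases h : i < σ.length
      · rw [List.getD_eq_getElem _ _ h] at hi
        exact hσ (show some x ∈ σ from hi ▸ List.getElem_mem h)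
      · rw [List.getD_eq_default _ _ (not_lt.mp h)] at hi
        split_ifs at hi with hL
        exact Option.some_inj.mp hi ▸ hL
    · intro hx
      exact ⟨σ.length + x, by simp [hx]⟩
  · refine List.ext_getElem (length_seg _ _) fun i hi hσi => ?_
    rw [getElem_seg, List.getD_eq_getElem _ _ hσi]

theorem exists_seg_eq_of_prefix_chain {c : ℕ → List (Option ℕ)} (hc : ∀ k, c k <+: c (k + 1))
    (hlen : StrictMono fun k => (c k).length) : ∃ T, ∀ k, seg T (c k).length = c k := by
  have hmono : ∀ {k l}, k ≤ l → c k <+: c l := fun hkl =>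
    Nat.le_induction (List.prefix_refl _) (fun l _ ih => ih.trans (hc l)) _ hkl
  refine ⟨fun i => (c (i + 1)).getD i none, fun k => ?_⟩
  refine List.ext_getElem (length_seg _ _) fun i hi hik => ?_
  have hi' : i < (c (i + 1)).length := hlen.id_le (i + 1)
  rw [getElem_seg, List.getD_eq_getElem _ _ hi', (hmono (le_max_left _ k)).getElem hi',
    (hmono (le_max_right (i + 1) k)).getElem hik]

theorem exists_stable_of_eventually_eq {M : Learner} {T : ℕ → Option ℕ} {v : Option ℕ}
    (h : ∀ᶠ s in atTop, M (seg T s) = v) :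
    ∃ n, M (seg T n) = v ∧ ∀ j, n ≤ j → M (seg T j) = M (seg T n) := by
  obtain ⟨n, hn⟩ := eventually_atTop.mp h
  exact ⟨n, hn n le_rfl, fun j hj => (hn j hj).trans (hn n le_rfl).symm⟩

end Texts

section Divergence

variable {H : ℕ → Set ℕ} {M : Learner} {C : Set (Set ℕ)}

theorem ExLearnsIn.exists_mind_change (hM : ExLearnsIn H M C) {L L' : Set ℕ} (hLL' : L ⊂ L')
    (hL : L ∈ C) (hL' : L' ∈ C) {σ : List (Option ℕ)} (hσ : cntL σ ⊆ L) :
    ∃ ρ τ, σ <+: ρ ∧ ρ <+: τ ∧ cntL τ ⊆ L' ∧ M ρ ≠ M τ := by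
  obtain ⟨T, hT, hTσ⟩ := exists_isText_seg_eq hσ
  obtain ⟨n, e, he, hHe, hstab⟩ := hM L hL T hT
  set ρ := seg T (max n σ.length)
  have hρ : cntL ρ ⊆ L' := (cntL_seg_subset T _).trans (hT ▸ hLL'.subset)
  obtain ⟨T', hT', hT'ρ⟩ := exists_isText_seg_eq hρ
  obtain ⟨n', e', he', hHe', hstab'⟩ := hM L' hL' T' hT'
  have hρτ := seg_prefix_seg T' (le_max_right n' ρ.length)
  rw [hT'ρ] at hρτ
  refine ⟨ρ, _, hTσ ▸ seg_prefix_seg T (le_max_right _ _), hρτ,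
    (cntL_seg_subset T' _).trans hT'.subset, ?_⟩
  rw [hstab _ (le_max_left _ _), hstab' _ (le_max_left _ _), he, he', Ne, Option.some_inj]
  rintro rfl
  exact hLL'.ne (hHe.symm.trans hHe')

theorem ExLearnsIn.exists_not_convergesOn (hM : ExLearnsIn H M C) {L : ℕ → Set ℕ}
    (hL : StrictMono L) (hLC : ∀ n, L n ∈ C) : ∃ T, ¬ ConvergesOn M T := by
  obtain ⟨f, hf⟩ := exists_seq_of_forall_exists
    (P := fun p : ℕ × List (Option ℕ) => cntL p.2 ⊆ L p.1)
    (r := fun p q => ∃ ρ, p.2 <+: ρ ∧ ρ <+: q.2 ∧ M ρ ≠ M q.2) (x₀ := (0, []))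
    (fun _ h => nomatch h) fun ⟨n, σ⟩ hσ => by
      obtain ⟨ρ, τ, hσρ, hρτ, hτ, hne⟩ := hM.exists_mind_change (hL n.lt_succ_self) (hLC n)
        (hLC (n + 1)) hσ
      exact ⟨(n + 1, τ), hτ, ρ, hσρ, hρτ, hne⟩
  have hlen : StrictMono fun k => (f k).2.length := strictMono_nat_of_lt_succ fun k => by
    obtain ⟨ρ, hσρ, hρτ, hne⟩ := hf k
    exact hσρ.length_le.trans_lt
      (lt_of_le_of_ne hρτ.length_le fun h => hne (congrArg M (hρτ.eq_of_length h)))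
  obtain ⟨T, hT⟩ := exists_seg_eq_of_prefix_chain (fun k => (hf k).elim fun ρ h => h.1.trans h.2.1)
    hlen
  refine ⟨T, fun ⟨N, hN⟩ => ?_⟩
  obtain ⟨ρ, hσρ, hρτ, hne⟩ := hf N
  have hNρ : N ≤ ρ.length := (hlen.id_le N).trans hσρ.length_le
  apply hne
  calc M ρ = M (seg T ρ.length) := congrArg M (eq_seg_of_prefix_seg (hT (N + 1) ▸ hρτ))
    _ = M (seg T (f (N + 1)).2.length) := (hN _ hNρ).trans (hN _ (hNρ.trans hρτ.length_le)).symm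
    _ = M (f (N + 1)).2 := by rw [hT]

end Divergence

section Learner

theorem dom_eval_iff_exists_isSome_evaln {c : Code} {n : ℕ} :
    (eval c n).Dom ↔ ∃ k, (evaln k c n).isSome := by
  simp only [Part.dom_iff_mem, evaln_complete, Option.isSome_iff_exists]
  exact ⟨fun ⟨x, k, h⟩ => ⟨k, x, h⟩, fun ⟨k, x, h⟩ => ⟨x, k, h⟩⟩

variable (c : Code)

def confirmed (σ : List (Option ℕ)) (y : ℕ) : Bool :=
  σ.reduceOption.any fun x => (evaln σ.length c (Nat.pair x y)).isSome

def guess (σ : List (Option ℕ)) : ℕ :=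
  (List.range (σ.length + 1)).findIdx fun y => !confirmed c σ y

/-- Dovetails the computations of `c` on `⟨y, z⟩`, `y < m`, by bounding their step counts
uniformly. -/
def closureSearch : ℕ →. ℕ := fun p =>
  Nat.rfind fun t =>
    Part.some ((List.range p.unpair.1).any fun y => (evaln t c (Nat.pair y p.unpair.2)).isSome)

theorem partrec_closureSearch : Nat.Partrec (closureSearch c) := by
  have h : Primrec₂ fun p t : ℕ =>
      (List.range p.unpair.1).any fun y => (evaln t c (Nat.pair y p.unpair.2)).isSome :=
    Primrec.list_any (Primrec.list_range.comp (Primrec.fst.comp (Primrec.unpair.comp .fst)))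
      (Primrec.option_isSome.comp (primrec_evaln.comp (((Primrec.snd.comp .fst).pair
        (.const c)).pair (Primrec₂.natPair.comp .snd
          (Primrec.snd.comp (Primrec.unpair.comp (Primrec.fst.comp .fst)))))))
  exact Partrec.nat_iff.mp (_root_.Partrec.rfind h.to_comp.partrec₂)

noncomputable def closureCode : Code := (exists_code.mp (partrec_closureSearch c)).choose

theorem eval_closureCode : eval (closureCode c) = closureSearch c :=
  (exists_code.mp (partrec_closureSearch c)).choose_spec

noncomputable def closureLearner : Learner :=
  fun σ => some (Encodable.encode ((closureCode c).curry (guess c σ)))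

theorem primrec₂_confirmed : Primrec₂ (confirmed c) :=
  Primrec.list_any ((Primrec.listFilterMap .fst (Primrec.snd.to₂)).of_eq fun _ => rfl)
    (Primrec.option_isSome.comp (primrec_evaln.comp
      (((Primrec.list_length.comp (Primrec.fst.comp .fst)).pair (.const c)).pair
        (Primrec₂.natPair.comp .snd (Primrec.snd.comp .fst)))))

theorem primrec_guess : Primrec (guess c) :=
  Primrec.list_findIdx (Primrec.list_range.comp (Primrec.succ.comp .list_length))
    (Primrec.not.comp₂ (primrec₂_confirmed c))

theorem computable_closureLearner : Computable (closureLearner c) :=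
  (Primrec.option_some.comp (Primrec.encode.comp
    (primrec₂_curry.comp (.const _) (primrec_guess c)))).to_comp

end Learner

section ClosureLearning

variable {c : Code} {R : ℕ → ℕ → Prop}

theorem W_encode_curry_closureCode (hc : ∀ x y, R x y ↔ (eval c (Nat.pair x y)).Dom) (m : ℕ) :
    W (Encodable.encode ((closureCode c).curry m)) = {z | ∃ y < m, R y z} := by
  ext z
  change (eval _ z).Dom ↔ _
  rw [Denumerable.ofNat_encode, eval_curry, eval_closureCode]
  refine Nat.rfind_dom.trans ?_
  simp only [Nat.unpair_pair, Part.mem_some_iff, Part.some_dom, implies_true, and_true,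
    eq_comm (a := true), List.any_eq_true, List.mem_range, Set.mem_ofPred_eq,
    hc, dom_eval_iff_exists_isSome_evaln]
  exact ⟨fun ⟨t, y, hy, h⟩ => ⟨y, hy, t, h⟩, fun ⟨y, hy, t, h⟩ => ⟨t, y, hy, h⟩⟩

theorem confirmed_eq_true_iff {σ : List (Option ℕ)} {y : ℕ} : confirmed c σ y = true ↔
    ∃ x, some x ∈ σ ∧ (evaln σ.length c (Nat.pair x y)).isSome := by
  simp [confirmed, List.any_eq_true, List.reduceOption_mem_iff]

theorem exists_rel_of_confirmed_seg (hc : ∀ x y, R x y ↔ (eval c (Nat.pair x y)).Dom)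
    {T : ℕ → Option ℕ} {s y : ℕ} (h : confirmed c (seg T s) y = true) : ∃ x ∈ cntT T, R x y := by
  obtain ⟨x, hx, hs⟩ := confirmed_eq_true_iff.mp h
  exact ⟨x, cntL_seg_subset T s hx, (hc x y).mpr (dom_eval_iff_exists_isSome_evaln.mpr ⟨_, hs⟩)⟩

theorem eventually_confirmed_seg (hc : ∀ x y, R x y ↔ (eval c (Nat.pair x y)).Dom)
    {T : ℕ → Option ℕ} {x y : ℕ} (hx : x ∈ cntT T) (h : R x y) :
    ∀ᶠ s in atTop, confirmed c (seg T s) y = true := by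
  obtain ⟨i, hi⟩ := hx
  obtain ⟨k, hk⟩ := dom_eval_iff_exists_isSome_evaln.mp ((hc x y).mp h)
  obtain ⟨v, hv⟩ := Option.isSome_iff_exists.mp hk
  filter_upwards [eventually_ge_atTop (max (i + 1) k)] with s hs
  refine confirmed_eq_true_iff.mpr ⟨x, List.mem_map.mpr ⟨i, List.mem_range.mpr (by omega), hi⟩, ?_⟩
  rw [length_seg]
  exact Option.isSome_iff_exists.mpr ⟨v, evaln_mono (by omega) hv⟩

theorem guess_eq {σ : List (Option ℕ)} {z : ℕ} (hz : z ≤ σ.length)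
    (hconf : confirmed c σ z = false) (hlt : ∀ y < z, confirmed c σ y = true) : guess c σ = z := by
  rw [guess, List.findIdx_eq (by simpa [Nat.lt_succ_iff] using hz)]
  simp_all

theorem eventually_guess_eq (hc : ∀ x y, R x y ↔ (eval c (Nat.pair x y)).Dom)
    {T : ℕ → Option ℕ} {z : ℕ} (hz : IsLeast {y | ∀ x ∈ cntT T, ¬ R x y} z) :
    ∀ᶠ s in atTop, guess c (seg T s) = z := by
  have hlt : ∀ y ∈ Finset.range z, ∀ᶠ s in atTop, confirmed c (seg T s) y = true := by
    intro y hy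
    obtain ⟨x, hx, hxy⟩ : ∃ x ∈ cntT T, R x y := by
      by_contra! h
      exact (hz.2 h).not_gt (Finset.mem_range.mp hy)
    exact eventually_confirmed_seg hc hx hxy
  filter_upwards [eventually_ge_atTop z, (eventually_all_finset _).mpr hlt] with s hs hconf
  refine guess_eq (by rwa [length_seg]) (Bool.eq_false_iff.mpr fun h => ?_)
    fun y hy => hconf y (Finset.mem_range.mpr hy)
  obtain ⟨x, hx, hxz⟩ := exists_rel_of_confirmed_seg hc h
  exact hz.1 x hx hxz

end ClosureLearning

noncomputable def relCode (η : PosEq) : Code := Denumerable.ofNat Code η.re.choose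

theorem rel_iff_dom_eval_relCode (η : PosEq) (x y : ℕ) :
    η.rel x y ↔ (eval (relCode η) (Nat.pair x y)).Dom :=
  η.re.choose_spec x y

theorem wConfLearnsIn_closureLearner_relCode (η : PosEq) :
    WConfLearnsIn W (closureLearner (relCode η)) (ascendingFamily η) := by
  have hlearner {T : ℕ → Option ℕ} {z : ℕ} (hz : IsLeast {y | ∀ x ∈ cntT T, ¬ η.rel x y} z) :
      ∀ᶠ s in atTop, closureLearner (relCode η) (seg T s) =
        some (Encodable.encode ((closureCode (relCode η)).curry z)) :=
    (eventually_guess_eq (rel_iff_dom_eval_relCode η) hz).mono fun s hs => by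
      rw [closureLearner, hs]
  refine ⟨?_, ?_⟩
  · rintro _ ⟨n, rfl⟩ T hT
    obtain ⟨s, hs, hstab⟩ := exists_stable_of_eventually_eq (hlearner (hT ▸ isLeast_a n))
    refine ⟨s, _, hs, ?_, hstab⟩
    rw [W_encode_curry_closureCode (rel_iff_dom_eval_relCode η), A_eq_setOf_exists_lt_a]
  · rintro T ⟨_, ⟨k, rfl⟩, hTk⟩
    have hne : {y | ∀ x ∈ cntT T, ¬ η.rel x y}.Nonempty :=
      ⟨a η k, fun _ hx => not_rel_a_of_mem_A (hTk hx)⟩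
    obtain ⟨s, -, hstab⟩ := exists_stable_of_eventually_eq (hlearner (isLeast_csInf hne))
    exact ⟨s, hstab⟩

/-- For every positive equivalence relation η, the ascending
family 𝒜_η is weakly confidently learnable but not confidently learnable. -/
theorem stmt14 (η : PosEq) :
    WConfLearnable (ascendingFamily η) ∧ ¬ ConfLearnable (ascendingFamily η) := by
  refine ⟨⟨_, computable_closureLearner _, wConfLearnsIn_closureLearner_relCode η⟩, ?_⟩
  rintro ⟨M, -, hEx, hconv⟩
  obtain ⟨T, hT⟩ := hEx.exists_not_convergesOn strictMono_A fun n => ⟨n, rfl⟩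
  exact hT (hconv T)

end PEL
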